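/- The variable chain example has space difference linear in the chain length: evaluating (letrec x1 = y1, y1 = x2, x2 = y2, …, xn = v in xn-chain demanding the value) on the plain Sestoft machine without (SCRem) copies the value v to each of the n bindings, so the final heap has size n·size(v), whereas with eager (SCRem) the final heap has size size(v); hence the space saved is (n−1)·size(v). -/

import Mathlib

/-- Machine expressions: arguments of applications, arguments of constructor
applications and the second argument of seq are variables. -/
inductive MExpr : Type where
  | var : ℕ → MExpr
  | lam : ℕ → MExpr → MExpr
  | app : MExpr → ℕ → MExpr
  | seqE : MExpr → ℕ → MExpr
  | constr : ℕ → List ℕ → MExpr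
  | letrec : List (ℕ × MExpr) → MExpr → MExpr
  | caseE : MExpr → List (ℕ × List ℕ × MExpr) → MExpr
deriving Inhabited

/-- Rename a single variable occurrence `y` to `x`. -/
def rv (y x v : ℕ) : ℕ := if v = y then x else v

/-- Substitution of the variable `x` for the variable `y` in a machine
expression: `e.ren y x = e[x/y]`. -/
def MExpr.ren (y x : ℕ) : MExpr → MExpr
  | .var v => .var (rv y x v)
  | .lam z s => .lam z (s.ren y x)
  | .app s v => .app (s.ren y x) (rv y x v)
  | .seqE s v => .seqE (s.ren y x) (rv y x v)
  | .constr c vs => .constr c (vs.map (rv y x))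
  | .letrec bs t => .letrec (bs.attach.map (fun b => (b.1.1, b.1.2.ren y x))) (t.ren y x)
  | .caseE e alts =>
      .caseE (e.ren y x) (alts.attach.map (fun a => (a.1.1, a.1.2.1, a.1.2.2.ren y x)))
decreasing_by all_goals first
  | (simp <;> omega)
  | (have h1 := List.sizeOf_lt_of_mem b.2;
     obtain ⟨⟨a1, a2⟩, hm⟩ := b <;> simp_all <;> omega)
  | (have h1 := List.sizeOf_lt_of_mem a.2;
     obtain ⟨⟨a1, a2, a3⟩, hm⟩ := a <;> simp_all <;> omega)

/-- Parallel variable-for-variable substitution `t[x⃗/y⃗]` used by (Branch). -/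
def substL (t : MExpr) (ys xs : List ℕ) : MExpr :=
  (ys.zip xs).foldl (fun t p => t.ren p.1 p.2) t

/-- Mark 1 values: abstractions and constructor applications. -/
def MExpr.isValue : MExpr → Prop
  | .lam _ _ => True
  | .constr _ _ => True
  | _ => False

abbrev Heap := List (ℕ × MExpr)

/-- Stack entries of the Mark 1 machine. -/
inductive Frame : Type where
  | appF : ℕ → Frame
  | seqF : ℕ → Frame
  | caseF : List (ℕ × List ℕ × MExpr) → Frame
  | updF : ℕ → Frame

def Frame.ren (y x : ℕ) : Frame → Frame
  | .appF v => .appF (rv y x v)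
  | .seqF v => .seqF (rv y x v)
  | .caseF alts => .caseF (alts.map (fun a => (a.1, a.2.1, a.2.2.ren y x)))
  | .updF v => .updF (rv y x v)

def heapRen (y x : ℕ) (Γ : Heap) : Heap :=
  Γ.map (fun b => (rv y x b.1, b.2.ren y x))

def removeH (Γ : Heap) (x : ℕ) : Heap := Γ.eraseP (fun b => b.1 == x)

/-- The variables of the `#upd` entries of a stack. -/
def updVars (S : List Frame) : List ℕ :=
  S.filterMap (fun f => match f with | .updF x => some x | _ => none)

/-- Machine states `⟨Γ | s | S⟩`. -/
structure MState : Type where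
  heap : Heap
  ctrl : MExpr
  stack : List Frame

/-- Selection of the (unique) matching case alternative. -/
def findAlt (alts : List (ℕ × List ℕ × MExpr)) (c : ℕ) : Option (List ℕ × MExpr) :=
  (alts.find? (fun a => a.1 == c)).map (fun a => a.2)

/-- Names of the transition rules of the Mark 1 machine. -/
inductive Rule : Type where
  | unwind1 | unwind2 | unwind3 | lookup | letrecR | subst
  | branch | seqR | update | blackhole | screm
deriving DecidableEq

/-- Labeled transition relation of the Mark 1 machine (with the optional
rule (SCRem)).  The rule (Letrec) carries the usual freshness condition on
the newly introduced binders. -/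
inductive Step : Rule → MState → MState → Prop where
  | unwind1 : ∀ Γ s x S, Step .unwind1 ⟨Γ, .app s x, S⟩ ⟨Γ, s, .appF x :: S⟩
  | unwind2 : ∀ Γ s x S, Step .unwind2 ⟨Γ, .seqE s x, S⟩ ⟨Γ, s, .seqF x :: S⟩
  | unwind3 : ∀ Γ s alts S,
      Step .unwind3 ⟨Γ, .caseE s alts, S⟩ ⟨Γ, s, .caseF alts :: S⟩
  | lookup : ∀ Γ x s S, List.lookup x Γ = some s →
      Step .lookup ⟨Γ, .var x, S⟩ ⟨removeH Γ x, s, .updF x :: S⟩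
  | letrecR : ∀ Γ bs t S,
      (∀ p ∈ bs, List.lookup p.1 Γ = none ∧ p.1 ∉ updVars S) →
      Step .letrecR ⟨Γ, .letrec bs t, S⟩ ⟨Γ ++ bs, t, S⟩
  | subst : ∀ Γ x s y S,
      Step .subst ⟨Γ, .lam x s, .appF y :: S⟩ ⟨Γ, s.ren x y, S⟩
  | branch : ∀ Γ c xs alts ys t S, findAlt alts c = some (ys, t) →
      Step .branch ⟨Γ, .constr c xs, .caseF alts :: S⟩ ⟨Γ, substL t ys xs, S⟩
  | seqR : ∀ Γ v y S, v.isValue →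
      Step .seqR ⟨Γ, v, .seqF y :: S⟩ ⟨Γ, .var y, S⟩
  | update : ∀ Γ v x S, v.isValue →
      Step .update ⟨Γ, v, .updF x :: S⟩ ⟨(x, v) :: Γ, v, S⟩
  | blackhole : ∀ Γ y S, List.lookup y Γ = none →
      Step .blackhole ⟨Γ, .var y, S⟩ ⟨Γ, .var y, S⟩
  | screm : ∀ Γ s x y S,
      Step .screm ⟨Γ, s, .updF x :: .updF y :: S⟩
        ⟨heapRen y x Γ, s.ren y x, .updF x :: S.map (Frame.ren y x)⟩

/-- Syntactic size of a machine expression. -/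
def MExpr.size : MExpr → ℕ
  | .var _ => 0
  | .lam _ s => 1 + s.size
  | .app s _ => 1 + s.size
  | .seqE s _ => 1 + s.size
  | .constr _ _ => 1
  | .letrec bs t => t.size + (bs.attach.map (fun b => b.1.2.size)).sum
  | .caseE e alts => 1 + e.size + (alts.attach.map (fun a => 1 + a.1.2.2.size)).sum
decreasing_by all_goals first
  | (simp <;> omega)
  | (have h1 := List.sizeOf_lt_of_mem b.2;
     obtain ⟨⟨a1, a2⟩, hm⟩ := b <;> simp_all <;> omega)
  | (have h1 := List.sizeOf_lt_of_mem a.2;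
     obtain ⟨⟨a1, a2, a3⟩, hm⟩ := a <;> simp_all <;> omega)

/-- All variables occurring in a machine expression. -/
def MExpr.vars : MExpr → Finset ℕ
  | .var v => {v}
  | .lam z s => insert z s.vars
  | .app s v => insert v s.vars
  | .seqE s v => insert v s.vars
  | .constr _ vs => vs.toFinset
  | .letrec bs t =>
      t.vars ∪ (bs.attach.map (fun b => insert b.1.1 b.1.2.vars)).foldr (· ∪ ·) ∅
  | .caseE e alts =>
      e.vars ∪ (alts.attach.map (fun a => a.1.2.1.toFinset ∪ a.1.2.2.vars)).foldr (· ∪ ·) ∅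
decreasing_by all_goals first
  | (simp <;> omega)
  | (have h1 := List.sizeOf_lt_of_mem b.2;
     obtain ⟨⟨a1, a2⟩, hm⟩ := b <;> simp_all <;> omega)
  | (have h1 := List.sizeOf_lt_of_mem a.2;
     obtain ⟨⟨a1, a2, a3⟩, hm⟩ := a <;> simp_all <;> omega)

/-- All variables occurring in a stack frame. -/
def Frame.vars : Frame → Finset ℕ
  | .appF v => {v}
  | .seqF v => {v}
  | .caseF alts => (alts.map (fun a => a.2.1.toFinset ∪ a.2.2.vars)).foldr (· ∪ ·) ∅
  | .updF v => {v}

def heapVars (Γ : Heap) : Finset ℕ :=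
  (Γ.map (fun b => insert b.1 b.2.vars)).foldr (· ∪ ·) ∅

def stackVars (S : List Frame) : Finset ℕ :=
  (S.map Frame.vars).foldr (· ∪ ·) ∅

/-- The size of a heap: the sum of the sizes of its binding expressions. -/
def heapSize (Γ : Heap) : ℕ := (Γ.map (fun b => b.2.size)).sum

/-- A run of the Mark 1 machine, recording the list of rules applied. -/
inductive Run : MState → List Rule → MState → Prop where
  | nil : ∀ q, Run q [] q
  | cons : ∀ r q q' rs q'', Step r q q' → Run q' rs q'' → Run q (r :: rs) q''

/-!
Each (Update) stores one more copy of `v`, so `n` updates add `n · size v` to the heap. With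
eager (SCRem) the renaming `x_{i+1} ↦ x_1` performed by each collapse is the identity on the heap,
on `v` and on the rest of the stack, because the chain variables are pairwise distinct and fresh
for all of them; so each (SCRem) merely pops one update entry, and a single (Update) remains.
-/

theorem mem_foldr_union {α : Type*} [DecidableEq α] (l : List (Finset α)) (a : α) :
    a ∈ l.foldr (· ∪ ·) ∅ ↔ ∃ s ∈ l, a ∈ s := by
  induction l <;> simp [*]

theorem mem_stackVars {a : ℕ} {S : List Frame} :
    a ∈ stackVars S ↔ ∃ f ∈ S, a ∈ f.vars := by
  simp [stackVars, mem_foldr_union]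

theorem rv_of_ne {y x v : ℕ} (h : v ≠ y) : rv y x v = v := if_neg h

theorem MExpr.ren_of_notMem_vars {y : ℕ} (x : ℕ) {e : MExpr} (h : y ∉ e.vars) :
    e.ren y x = e := by
  induction e using MExpr.ren.induct with
  | case1 v =>
    simp only [MExpr.vars, Finset.mem_singleton] at h
    rw [MExpr.ren, rv_of_ne (Ne.symm h)]
  | case2 z s ih =>
    simp only [MExpr.vars, Finset.mem_insert, not_or] at h
    rw [MExpr.ren, ih h.2]
  | case3 s v ih | case4 s v ih =>
    simp only [MExpr.vars, Finset.mem_insert, not_or] at h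
    rw [MExpr.ren, ih h.2, rv_of_ne (Ne.symm h.1)]
  | case5 c vs =>
    simp only [MExpr.vars, List.mem_toFinset] at h
    rw [MExpr.ren, (List.map_congr_left fun v hv => rv_of_ne (ne_of_mem_of_not_mem hv h)).trans
      (List.map_id _)]
  | case6 bs t ihb iht =>
    simp only [MExpr.vars, Finset.mem_union, mem_foldr_union, not_or] at h
    rw [MExpr.ren, iht h.1]
    conv_rhs => rw [← List.attach_map_subtype_val bs]
    refine congrArg (MExpr.letrec · t) (List.map_congr_left fun b _ => ?_)
    rw [ihb b fun hy => h.2 ⟨_, List.mem_map_of_mem (List.mem_attach _ b),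
      Finset.mem_insert_of_mem hy⟩]
  | case7 e alts ihe iha =>
    simp only [MExpr.vars, Finset.mem_union, mem_foldr_union, not_or] at h
    rw [MExpr.ren, ihe h.1]
    conv_rhs => rw [← List.attach_map_subtype_val alts]
    refine congrArg (MExpr.caseE e) (List.map_congr_left fun a _ => ?_)
    rw [iha a fun hy => h.2 ⟨_, List.mem_map_of_mem (List.mem_attach _ a),
      Finset.mem_union_right _ hy⟩]

theorem Frame.ren_of_notMem_vars {y : ℕ} (x : ℕ) {f : Frame} (h : y ∉ f.vars) :
    f.ren y x = f := by
  cases f with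
  | appF v | seqF v | updF v =>
    rw [Frame.vars, Finset.mem_singleton] at h
    rw [Frame.ren, rv_of_ne (Ne.symm h)]
  | caseF alts =>
    rw [Frame.vars, mem_foldr_union] at h
    rw [Frame.ren, (List.map_congr_left fun a ha => ?_).trans (List.map_id _)]
    rw [MExpr.ren_of_notMem_vars x fun hy =>
      h ⟨_, List.mem_map_of_mem ha, Finset.mem_union_right _ hy⟩]
    rfl

theorem map_frameRen_of_notMem_stackVars {y : ℕ} (x : ℕ) {S : List Frame}
    (h : y ∉ stackVars S) : S.map (Frame.ren y x) = S :=
  (List.map_congr_left fun f hf =>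
    Frame.ren_of_notMem_vars x fun hy => h (mem_stackVars.2 ⟨f, hf, hy⟩)).trans (List.map_id _)

theorem heapRen_of_notMem_heapVars {y : ℕ} (x : ℕ) {Γ : Heap} (h : y ∉ heapVars Γ) :
    heapRen y x Γ = Γ := by
  refine (List.map_congr_left fun b hb => ?_).trans (List.map_id _)
  have hb : y ∉ insert b.1 b.2.vars := fun hy =>
    h ((mem_foldr_union _ _).2 ⟨_, List.mem_map_of_mem hb, hy⟩)
  rw [Finset.mem_insert, not_or] at hb
  rw [rv_of_ne (Ne.symm hb.1), MExpr.ren_of_notMem_vars x hb.2]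
  rfl

theorem notMem_stackVars_map_updF_append {y : ℕ} {ys : List ℕ} {S : List Frame}
    (hys : y ∉ ys) (hS : y ∉ stackVars S) : y ∉ stackVars (ys.map Frame.updF ++ S) := by
  simp only [mem_stackVars] at hS ⊢
  rintro ⟨f, hf, hy⟩
  rcases List.mem_append.1 hf with hf | hf
  · obtain ⟨z, hz, rfl⟩ := List.mem_map.1 hf
    rw [Frame.vars, Finset.mem_singleton] at hy
    exact hys (hy ▸ hz)
  · exact hS ⟨f, hf, hy⟩

theorem run_update_chain {v : MExpr} (hv : v.isValue) (xs : List ℕ) (Γ : Heap)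
    (S : List Frame) :
    Run ⟨Γ, v, xs.map Frame.updF ++ S⟩ (List.replicate xs.length .update)
      ⟨xs.reverse.map (fun x => (x, v)) ++ Γ, v, S⟩ := by
  induction xs generalizing Γ with
  | nil => exact Run.nil _
  | cons x xs ih =>
    rw [List.length_cons, List.replicate_succ, List.reverse_cons, List.map_append,
      List.append_assoc]
    exact Run.cons _ _ _ _ _ (Step.update Γ v x _ hv) (ih ((x, v) :: Γ))

theorem run_screm_chain {v : MExpr} (hv : v.isValue) {xs : List ℕ} (hnd : xs.Nodup) (x : ℕ)
    (Γ : Heap) (S : List Frame)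
    (hfresh : ∀ a ∈ xs, a ∉ v.vars ∧ a ∉ heapVars Γ ∧ a ∉ stackVars S) :
    Run ⟨Γ, v, .updF x :: xs.map Frame.updF ++ S⟩
      (List.replicate xs.length .screm ++ [.update]) ⟨(x, v) :: Γ, v, S⟩ := by
  induction xs with
  | nil => exact Run.cons _ _ _ _ _ (Step.update Γ v x S hv) (Run.nil _)
  | cons y ys ih =>
    obtain ⟨hyv, hyΓ, hyS⟩ := hfresh y List.mem_cons_self
    obtain ⟨hy, hnd⟩ := List.nodup_cons.1 hnd
    have hstep := Step.screm Γ v x y (ys.map Frame.updF ++ S)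
    rw [heapRen_of_notMem_heapVars x hyΓ, MExpr.ren_of_notMem_vars x hyv,
      map_frameRen_of_notMem_stackVars x (notMem_stackVars_map_updF_append hy hyS)] at hstep
    exact Run.cons _ _ _ _ _ hstep
      (ih hnd fun a ha => hfresh a (List.mem_cons_of_mem _ ha))

theorem heapSize_cons (b : ℕ × MExpr) (Γ : Heap) :
    heapSize (b :: Γ) = b.2.size + heapSize Γ := by
  simp [heapSize]

theorem heapSize_append (Γ Δ : Heap) : heapSize (Γ ++ Δ) = heapSize Γ + heapSize Δ := by
  simp [heapSize]

theorem heapSize_map_pair (v : MExpr) (xs : List ℕ) :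
    heapSize (xs.map fun x => (x, v)) = xs.length * v.size := by
  simp [heapSize, Function.comp_def]

/-- the variable-chain example.  After looking up a chain of
`n` variable bindings ending in a value `v`, the machine is in a state
`⟨Γ | v | #upd(x_n) : … : #upd(x_1) : S⟩` with `n` update entries for
pairwise distinct variables not occurring in `Γ`, `v` or `S`.  Without
(SCRem), `n` successive (Update) transitions copy `v` to each binding of the
chain, giving a final heap of size `heapSize Γ + n·size(v)`; with eager
(SCRem), `n−1` (SCRem) transitions collapse the update entries to a single
one and one (Update) adds a single binding, giving a final heap of size
`heapSize Γ + size(v)`; hence the space saved is `(n−1)·size(v)`. -/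
theorem variable_chain_space_difference
    (v : MExpr) (hv : v.isValue) (xs : List ℕ) (hx : xs ≠ [])
    (hnd : xs.Nodup) (Γ : Heap) (S : List Frame)
    (hfresh : ∀ a ∈ xs, a ∉ v.vars ∧ a ∉ heapVars Γ ∧ a ∉ stackVars S) :
    (Run ⟨Γ, v, xs.map Frame.updF ++ S⟩ (List.replicate xs.length .update)
        ⟨xs.reverse.map (fun x => (x, v)) ++ Γ, v, S⟩ ∧
      heapSize (xs.reverse.map (fun x => (x, v)) ++ Γ) =
        heapSize Γ + xs.length * v.size) ∧
    (Run ⟨Γ, v, xs.map Frame.updF ++ S⟩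
        (List.replicate (xs.length - 1) .screm ++ [.update])
        ⟨(xs.head hx, v) :: Γ, v, S⟩ ∧
      heapSize ((xs.head hx, v) :: Γ) = heapSize Γ + v.size) ∧
    (heapSize Γ + xs.length * v.size) - (heapSize Γ + v.size) =
      (xs.length - 1) * v.size := by
  obtain ⟨x, xs, rfl⟩ := List.exists_cons_of_ne_nil hx
  refine ⟨⟨run_update_chain hv _ Γ S, ?_⟩, ⟨?_, ?_⟩, ?_⟩
  · rw [heapSize_append, heapSize_map_pair, List.length_reverse, Nat.add_comm]
  · exact run_screm_chain hv (List.nodup_cons.1 hnd).2 x Γ S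
      fun a ha => hfresh a (List.mem_cons_of_mem _ ha)
  · rw [heapSize_cons, Nat.add_comm]
  · rw [Nat.add_sub_add_left, Nat.sub_one_mul]
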